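/- arXiv:2603.25488 — 2 statements merged into one kernel-verified Lean document; each statement's English description precedes it below -/
import Mathlib

section
/- If λ and μ are adjacent vertices of the partition graph G_n, then h(λ) ≠ h(μ), where h denotes the height function. In particular, every edge of G_n admits a unique orientation from its endpoint of smaller height to its endpoint of larger height. -/
/-- One partition is obtained from another by an elementary unit transfer:
pick two (occurrences of) parts, increase one by 1 and decrease the other by 1,
deleting the latter if it becomes 0.  Since a partition is recorded as a
multiset of parts, reordering into nonincreasing form is automatic. -/
def UnitTransfer {n : ℕ} (p q : Nat.Partition n) : Prop :=
  ∃ (a b : ℕ) (rest : Multiset ℕ),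
    p.parts = a ::ₘ b ::ₘ rest ∧
    q.parts = (a + 1) ::ₘ (if b = 1 then rest else (b - 1) ::ₘ rest)

/-- The partition graph `G_n`: vertices are partitions of `n`, two distinct
partitions are adjacent when one is obtained from the other by an elementary
unit transfer. -/
def partitionGraph (n : ℕ) : SimpleGraph (Nat.Partition n) :=
  SimpleGraph.fromRel UnitTransfer

/-- Graph distance `d_S(λ) = min_{σ ∈ S} d(λ, σ)` from a vertex to a set. -/
noncomputable def dSet {n : ℕ} (S : Set (Nat.Partition n)) (l : Nat.Partition n) : ℕ :=
  sInf ((fun s => (partitionGraph n).dist l s) '' S)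

/-- The parts of a partition listed in nonincreasing order. -/
def sortedParts {n : ℕ} (p : Nat.Partition n) : List ℕ :=
  (p.parts.sort (· ≤ ·)).reverse

/-- The height `h(λ) = Σ i·λ_i`, where `λ_1 ≥ λ_2 ≥ …` are the parts in
nonincreasing order. -/
def height {n : ℕ} (p : Nat.Partition n) : ℕ :=
  ((sortedParts p).zipIdx.map (fun x => (x.2 + 1) * x.1)).sum


/-!
Writing `λ_1 ≥ λ_2 ≥ …` for the parts, `min (λ_i, λ_j) = λ_{max (i, j)}`, so the sum of
`min (λ_i, λ_j)` over all ordered pairs `(i, j)` equals `Σ (2i - 1) λ_i`, that is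
`2 h(λ) = n + Σ_{i,j} min (λ_i, λ_j)`. This order-free expression makes a unit transfer
easy to follow: moving a unit from a part `b` to a part `a` strictly decreases the pair sum
when `b ≤ a`, strictly increases it when `b ≥ a + 2`, and leaves the partition itself
unchanged when `b = a + 1`.
-/

open Multiset

def minPairSum (s : Multiset ℕ) : ℕ := ((s ×ˢ s).map fun z => min z.1 z.2).sum

theorem minPairSum_cons (x : ℕ) (s : Multiset ℕ) :
    minPairSum (x ::ₘ s) = minPairSum s + 2 * (s.map (min x)).sum + x := by
  have hleft : ((s.map (Prod.mk x)).map fun z => min z.1 z.2) = s.map (min x) := by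
    simp only [map_map, Function.comp_def]
  have hright : ((s.map fun a => (a, x)).map fun z => min z.1 z.2) = s.map (min x) := by
    simp only [map_map, Function.comp_def, min_comm]
  rw [minPairSum, minPairSum, cons_product, product_cons, map_add, map_add, map_cons, map_cons,
    hleft, hright, sum_add, sum_add, sum_cons, min_self]
  ring

theorem minPairSum_zero_cons (s : Multiset ℕ) : minPairSum (0 ::ₘ s) = minPairSum s := by
  simp [minPairSum_cons]

theorem minPairSum_cons_cons (x y : ℕ) (s : Multiset ℕ) :
    minPairSum (x ::ₘ y ::ₘ s) =
      minPairSum s + 2 * (s.map fun z => min x z + min y z).sum + 2 * min x y + x + y := by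
  rw [minPairSum_cons, minPairSum_cons, map_cons, sum_cons, sum_map_add]
  ring

theorem minPairSum_spread_lt {x c : ℕ} (hcx : c + 1 ≤ x) (s : Multiset ℕ) :
    minPairSum ((x + 1) ::ₘ c ::ₘ s) < minPairSum (x ::ₘ (c + 1) ::ₘ s) := by
  have hrest : (s.map fun z => min (x + 1) z + min c z).sum
      ≤ (s.map fun z => min x z + min (c + 1) z).sum :=
    sum_map_le_sum_map _ _ fun z _ => by omega
  have hpair : min (x + 1) c < min x (c + 1) := by omega
  rw [minPairSum_cons_cons, minPairSum_cons_cons]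
  omega

theorem two_mul_sum_zipIdx_of_pairwise_ge {l : List ℕ} (hl : l.Pairwise (· ≥ ·)) (k : ℕ) :
    2 * ((l.zipIdx k).map fun x => (x.2 + 1) * x.1).sum
      = 2 * k * l.sum + l.sum + minPairSum l := by
  induction l generalizing k with
  | nil => simp [minPairSum]
  | cons a l ih =>
    obtain ⟨ha, hl⟩ := List.pairwise_cons.1 hl
    have hmin : ((l : Multiset ℕ).map (min a)).sum = l.sum := by
      rw [map_congr rfl fun y hy => min_eq_right (ha y (mem_coe.1 hy)), map_id', sum_coe]
    rw [List.zipIdx_cons, List.map_cons, List.sum_cons, List.sum_cons, ← cons_coe,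
      minPairSum_cons, hmin]
    have := ih hl (k + 1)
    linear_combination this

theorem two_mul_height {n : ℕ} (p : Nat.Partition n) :
    2 * height p = n + minPairSum p.parts := by
  have hsorted : (sortedParts p).Pairwise (· ≥ ·) :=
    List.pairwise_reverse.2 (pairwise_sort _ _)
  have hcoe : ((sortedParts p : List ℕ) : Multiset ℕ) = p.parts := by
    rw [sortedParts, coe_reverse, sort_eq]
  have hsum : (sortedParts p).sum = n := by
    rw [← sum_coe, hcoe, p.parts_sum]
  rw [height, two_mul_sum_zipIdx_of_pairwise_ge hsorted 0, hcoe, hsum]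
  ring

theorem minPairSum_transfer_ne {a b : ℕ} (hb : 1 ≤ b) (hba : b ≠ a + 1) (s : Multiset ℕ) :
    minPairSum ((a + 1) ::ₘ (b - 1) ::ₘ s) ≠ minPairSum (a ::ₘ b ::ₘ s) := by
  obtain ⟨c, rfl⟩ : ∃ c, b = c + 1 := ⟨b - 1, by omega⟩
  rw [Nat.add_sub_cancel]
  rcases lt_or_gt_of_ne hba with hlt | hgt
  · exact (minPairSum_spread_lt (by omega) s).ne
  · have := minPairSum_spread_lt (show a + 1 ≤ c by omega) s
    rw [cons_swap (c + 1), cons_swap c] at this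
    exact this.ne'

theorem UnitTransfer.height_ne {n : ℕ} {p q : Nat.Partition n} (h : UnitTransfer p q)
    (hpq : p ≠ q) : height p ≠ height q := by
  obtain ⟨a, b, rest, hp, hq⟩ := h
  have ha : 1 ≤ a := p.parts_pos (by simp [hp])
  have hb : 1 ≤ b := p.parts_pos (by simp [hp])
  have hba : b ≠ a + 1 := by
    rintro rfl
    exact hpq (Nat.Partition.ext (by rw [hp, hq, if_neg (by omega), Nat.add_sub_cancel,
      cons_swap]))
  -- a zero part does not contribute, so the `if` in `UnitTransfer` can be dropped
  have hq' : minPairSum q.parts = minPairSum ((a + 1) ::ₘ (b - 1) ::ₘ rest) := by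
    rw [hq]
    split_ifs with hb1
    · rw [hb1, Nat.sub_self, cons_swap, minPairSum_zero_cons]
    · rfl
  have hp2 := two_mul_height p
  have hq2 := two_mul_height q
  rw [hp] at hp2
  rw [hq'] at hq2
  have := minPairSum_transfer_ne hb hba rest
  omega

/-- Adjacent vertices of `G_n` have distinct heights; hence every edge admits
a unique height direction. -/
theorem height_ne_of_adj {n : ℕ} (l m : Nat.Partition n)
    (h : (partitionGraph n).Adj l m) : height l ≠ height m := by
  obtain ⟨hne, hlm | hml⟩ := h
  · exact hlm.height_ne hne
  · exact (hml.height_ne hne.symm).symm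
end

section
/- Let S and T be nonempty and distinct sets of vertices of the partition graph G_n. Then S and T are not directionally equivalent: there exists an ordered pair (λ,μ) of adjacent vertices of G_n such that σ_S(λ,μ) ≠ σ_T(λ,μ). -/
/-- Sum of squares of the parts: a potential function maximized exactly at the
one-part partition. -/
def fMeas {n : ℕ} (p : Nat.Partition n) : ℕ := (p.parts.map fun x => x * x).sum

lemma fMeas_le {n : ℕ} (p : Nat.Partition n) : fMeas p ≤ n * n := by
  have h1 : ∀ x ∈ p.parts, x * x ≤ x * n := by
    intro x hx
    exact Nat.mul_le_mul_left x (p.parts_sum ▸ Multiset.le_sum_of_mem hx)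
  calc fMeas p ≤ (p.parts.map fun x => x * n).sum :=
        Multiset.sum_map_le_sum_map _ _ h1
    _ = p.parts.sum * n := by
        simpa using (Multiset.sum_map_mul_right (s := p.parts) (f := fun i => i) (a := n))
    _ = n * n := by rw [p.parts_sum]

/-- Any partition with at least two parts is adjacent to a partition with a
strictly larger sum of squares. -/
lemma exists_adj_fMeas_lt {n : ℕ} (p : Nat.Partition n) (h2 : 2 ≤ Multiset.card p.parts) :
    ∃ q : Nat.Partition n, (partitionGraph n).Adj p q ∧ fMeas p < fMeas q := by
  obtain ⟨x, hxmem⟩ := Multiset.card_pos_iff_exists_mem.mp (by omega : 0 < Multiset.card p.parts)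
  obtain ⟨s, hxs⟩ := Multiset.exists_cons_of_mem hxmem
  have hs1 : 1 ≤ Multiset.card s := by
    have := h2; rw [hxs, Multiset.card_cons] at this; omega
  obtain ⟨y, hymem⟩ := Multiset.card_pos_iff_exists_mem.mp (by omega : 0 < Multiset.card s)
  obtain ⟨rest, hyr⟩ := Multiset.exists_cons_of_mem hymem
  obtain ⟨a, b, hab, hparts⟩ : ∃ a b : ℕ, b ≤ a ∧ p.parts = a ::ₘ b ::ₘ rest := by
    rcases le_total x y with h | h
    · exact ⟨y, x, h, by rw [hxs, hyr, Multiset.cons_swap]⟩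
    · exact ⟨x, y, h, by rw [hxs, hyr]⟩
  have hapos : 0 < a := p.parts_pos (hparts ▸ Multiset.mem_cons_self _ _)
  have hbpos : 0 < b := p.parts_pos (hparts ▸ Multiset.mem_cons_of_mem (Multiset.mem_cons_self _ _))
  have hpos : ∀ {i : ℕ}, i ∈ (a + 1) ::ₘ (if b = 1 then rest else (b - 1) ::ₘ rest) → 0 < i := by
    intro i hi
    rcases Multiset.mem_cons.mp hi with h | h
    · omega
    · split_ifs at h with hb1
      · exact p.parts_pos (hparts ▸ Multiset.mem_cons_of_mem (Multiset.mem_cons_of_mem h))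
      · rcases Multiset.mem_cons.mp h with h | h
        · omega
        · exact p.parts_pos (hparts ▸ Multiset.mem_cons_of_mem (Multiset.mem_cons_of_mem h))
  have hsum0 : a + (b + rest.sum) = n := by
    have := p.parts_sum; rw [hparts] at this; simpa using this
  have hsum : ((a + 1) ::ₘ (if b = 1 then rest else (b - 1) ::ₘ rest)).sum = n := by
    split_ifs with hb1
    · simp only [Multiset.sum_cons]; omega
    · simp only [Multiset.sum_cons]; omega
  set q : Nat.Partition n := ⟨(a + 1) ::ₘ (if b = 1 then rest else (b - 1) ::ₘ rest), hpos, hsum⟩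
    with hq
  have hlt : fMeas p < fMeas q := by
    show (Multiset.map (fun x => x * x) p.parts).sum <
      (Multiset.map (fun x => x * x) q.parts).sum
    conv_lhs => rw [hparts]
    show _ < (Multiset.map (fun x => x * x)
      ((a + 1) ::ₘ (if b = 1 then rest else (b - 1) ::ₘ rest))).sum
    simp only [Multiset.map_cons, Multiset.sum_cons]
    split_ifs with hb1
    · subst hb1; nlinarith
    · simp only [Multiset.map_cons, Multiset.sum_cons]
      have hbb : (b - 1) * (b - 1) + 2 * b = b * b + 1 := by
        obtain ⟨c, rfl⟩ : ∃ c, b = c + 1 := ⟨b - 1, by omega⟩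
        simp only [Nat.add_sub_cancel]; ring
      nlinarith
  refine ⟨q, ?_, hlt⟩
  have hne : p ≠ q := by
    intro h; rw [h] at hlt; exact lt_irrefl _ hlt
  show (SimpleGraph.fromRel UnitTransfer).Adj p q
  rw [SimpleGraph.fromRel_adj]
  exact ⟨hne, Or.inl ⟨a, b, rest, hparts, rfl⟩⟩

lemma small_unique {n : ℕ} (p q : Nat.Partition n)
    (hp : Multiset.card p.parts ≤ 1) (hq : Multiset.card q.parts ≤ 1) : p = q := by
  have key : ∀ r : Nat.Partition n, Multiset.card r.parts ≤ 1 →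
      r.parts = if n = 0 then 0 else {n} := by
    intro r hr
    interval_cases h : Multiset.card r.parts
    · have h0 : r.parts = 0 := Multiset.card_eq_zero.mp h
      have : n = 0 := by rw [← r.parts_sum, h0]; simp
      simp [h0, this]
    · obtain ⟨x, hx⟩ := Multiset.card_eq_one.mp h
      have hxn : x = n := by
        have := r.parts_sum; rw [hx] at this; simpa using this
      have hnpos : 0 < n := hxn ▸ r.parts_pos (hx ▸ Multiset.mem_singleton_self x)
      rw [hx, hxn, if_neg (by omega)]
  exact Nat.Partition.ext ((key p hp).trans (key q hq).symm)

lemma reach_small {n : ℕ} (p : Nat.Partition n) :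
    ∃ r : Nat.Partition n, Multiset.card r.parts ≤ 1 ∧ (partitionGraph n).Reachable p r := by
  by_cases h : Multiset.card p.parts ≤ 1
  · exact ⟨p, h, SimpleGraph.Reachable.refl p⟩
  · obtain ⟨q, hadj, hlt⟩ := exists_adj_fMeas_lt p (by omega)
    have hdec : n * n - fMeas q < n * n - fMeas p := by
      have := fMeas_le q; omega
    obtain ⟨r, hr, hreach⟩ := reach_small q
    exact ⟨r, hr, (hadj.reachable).trans hreach⟩
termination_by n * n - fMeas p

lemma partitionGraph_connected_reachable {n : ℕ} (p q : Nat.Partition n) :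
    (partitionGraph n).Reachable p q := by
  obtain ⟨r, hr, hpr⟩ := reach_small p
  obtain ⟨r', hr', hqr⟩ := reach_small q
  rw [small_unique r' r hr' hr] at hqr
  exact hpr.trans hqr.symm

lemma dSet_eq_zero_iff {n : ℕ} (S : Set (Nat.Partition n)) (hS : S.Nonempty)
    (l : Nat.Partition n) : dSet S l = 0 ↔ l ∈ S := by
  constructor
  · intro h
    rcases Nat.sInf_eq_zero.mp h with h0 | hemp
    · obtain ⟨s, hs, hds⟩ := h0
      have := (partitionGraph_connected_reachable l s).dist_eq_zero_iff.mp hds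
      rwa [this]
    · exact absurd hemp (Set.Nonempty.ne_empty (hS.image _))
  · intro h
    refine Nat.eq_zero_of_le_zero (Nat.sInf_le ?_)
    exact ⟨l, h, SimpleGraph.dist_self⟩

/-- Distinct nonempty reference sets are not directionally equivalent: some
oriented edge has different directional increments with respect to `S` and `T`. -/
theorem not_directionally_equivalent {n : ℕ} (S T : Set (Nat.Partition n))
    (hS : S.Nonempty) (hT : T.Nonempty) (hne : S ≠ T) :
    ∃ l m : Nat.Partition n, (partitionGraph n).Adj l m ∧
      (dSet S m : ℤ) - dSet S l ≠ (dSet T m : ℤ) - dSet T l := by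
  by_contra hcon
  push_neg at hcon
  -- the difference d_S - d_T is constant along edges, hence constant
  have hedge : ∀ l m : Nat.Partition n, (partitionGraph n).Adj l m →
      (dSet S l : ℤ) - dSet T l = (dSet S m : ℤ) - dSet T m := by
    intro l m hadj
    have := hcon l m hadj
    linarith
  have hwalk : ∀ l m : Nat.Partition n, (partitionGraph n).Walk l m →
      (dSet S l : ℤ) - dSet T l = (dSet S m : ℤ) - dSet T m := by
    intro l m w
    induction w with
    | nil => rfl
    | cons h _ ih => exact (hedge _ _ h).trans ih
  have hconst : ∀ l m : Nat.Partition n,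
      (dSet S l : ℤ) - dSet T l = (dSet S m : ℤ) - dSet T m := by
    intro l m
    exact (partitionGraph_connected_reachable l m).elim fun w => hwalk l m w
  obtain ⟨s, hs⟩ := id hS
  obtain ⟨t, ht⟩ := id hT
  have hds : dSet S s = 0 := (dSet_eq_zero_iff S hS s).mpr hs
  have hdt : dSet T t = 0 := (dSet_eq_zero_iff T hT t).mpr ht
  have hst := hconst s t
  rw [hds, hdt] at hst
  have hTs : dSet T s = 0 := by omega
  have heq : ∀ l, dSet S l = dSet T l := by
    intro l
    have h1 := hconst s l
    rw [hds, hTs] at h1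
    omega
  apply hne
  ext l
  rw [← dSet_eq_zero_iff S hS l, ← dSet_eq_zero_iff T hT l, heq l]
end
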